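/- Disparity score upper bound: Let (Ω, P) be a finite probability space carrying random vectors y_t, y_v, ŷ_t, ŷ_v ∈ ℝ^c and X'_t, X'_v ∈ ℝ^{d'}, such that (i) E[ŷ_t] = E[ŷ_v], (ii) E[X'_t] = E[X'_v], (iii) the pair differences satisfy E[(ŷ_t − ŷ_v) ⊗ X'_t] = E[ŷ_t − ŷ_v] ⊗ E[X'_t], E[(ŷ_v − y_v) ⊗ (X'_t − X'_v)] = E[ŷ_v − y_v] ⊗ E[X'_t − X'_v], and E[(y_t − y_v) ⊗ X'_t] = E[y_t − y_v] ⊗ E[X'_t], and (iv) ‖E[X'_t]‖ ≤ σ. Define g_t = (ŷ_t − y_t, (ŷ_t − y_t) ⊗ X'_t) and g_v = (ŷ_v − y_v, (ŷ_v − y_v) ⊗ X'_v). Then ‖E[g_t] − E[g_v]‖ ≤ E[‖y_t − y_v‖] · √(1 + σ²). -/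

import Mathlib

open scoped RealInnerProductSpace

/-- Outer product of two Euclidean vectors, flattened to a Euclidean vector. -/
def eOuter {c d : ℕ} (u : EuclideanSpace ℝ (Fin c)) (x : EuclideanSpace ℝ (Fin d)) :
    EuclideanSpace ℝ (Fin c × Fin d) :=
  WithLp.toLp 2 (fun q : Fin c × Fin d => u q.1 * x q.2)

/-- Concatenation of two Euclidean vectors. -/
def eConcat {ι κ : Type*} (a : EuclideanSpace ℝ ι) (b : EuclideanSpace ℝ κ) :
    EuclideanSpace ℝ (ι ⊕ κ) :=
  WithLp.toLp 2 (Sum.elim a b)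

/-- Expectation of a vector-valued random variable on a finite probability space
with weights `p`. -/
def eExpect {Ω : Type*} [Fintype Ω] (p : Ω → ℝ) {E : Type*} [AddCommMonoid E] [Module ℝ E]
    (Y : Ω → E) : E :=
  ∑ ω, p ω • Y ω

/-!
Under the hypotheses the mean gradient difference is exactly `(A, A ⊗ E[X'_t])` with
`A = E[y_v - y_t]`: writing `ŷ_t - y_t = (ŷ_t - ŷ_v) + (ŷ_v - y_v) - (y_t - y_v)`, the first
term has mean zero and factors against `X'_t`, the residual `ŷ_v - y_v` meets the same mean
feature in both gradients since `E[X'_t - X'_v] = 0`, and the label term factors. As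
`‖a ⊗ x‖ = ‖a‖ ‖x‖`, this vector has norm `‖A‖ √(1 + ‖E[X'_t]‖²)`, and `‖A‖ ≤ E‖y_t - y_v‖`
by the triangle inequality.
-/

section Outer

variable {c d : ℕ}

lemma eOuter_add_left (u v : EuclideanSpace ℝ (Fin c)) (x : EuclideanSpace ℝ (Fin d)) :
    eOuter (u + v) x = eOuter u x + eOuter v x := by
  ext q; simp [eOuter, add_mul]

lemma eOuter_sub_left (u v : EuclideanSpace ℝ (Fin c)) (x : EuclideanSpace ℝ (Fin d)) :
    eOuter (u - v) x = eOuter u x - eOuter v x := by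
  ext q; simp [eOuter, sub_mul]

lemma eOuter_neg_left (u : EuclideanSpace ℝ (Fin c)) (x : EuclideanSpace ℝ (Fin d)) :
    eOuter (-u) x = -eOuter u x := by
  ext q; simp [eOuter]

lemma eOuter_sub_right (u : EuclideanSpace ℝ (Fin c)) (x y : EuclideanSpace ℝ (Fin d)) :
    eOuter u (x - y) = eOuter u x - eOuter u y := by
  ext q; simp [eOuter, mul_sub]

lemma eOuter_zero_left (x : EuclideanSpace ℝ (Fin d)) :
    eOuter (0 : EuclideanSpace ℝ (Fin c)) x = 0 := by
  ext q; simp [eOuter]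

lemma eOuter_zero_right (u : EuclideanSpace ℝ (Fin c)) :
    eOuter u (0 : EuclideanSpace ℝ (Fin d)) = 0 := by
  ext q; simp [eOuter]

lemma norm_eOuter (u : EuclideanSpace ℝ (Fin c)) (x : EuclideanSpace ℝ (Fin d)) :
    ‖eOuter u x‖ = ‖u‖ * ‖x‖ := by
  rw [← pow_left_inj₀ (norm_nonneg _) (by positivity) two_ne_zero, mul_pow,
    EuclideanSpace.real_norm_sq_eq, EuclideanSpace.real_norm_sq_eq,
    EuclideanSpace.real_norm_sq_eq, Fintype.sum_prod_type, Finset.sum_mul_sum]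
  simp [eOuter, mul_pow]

end Outer

section Concat

variable {ι κ : Type*}

lemma eConcat_sub (a a' : EuclideanSpace ℝ ι) (b b' : EuclideanSpace ℝ κ) :
    eConcat a b - eConcat a' b' = eConcat (a - a') (b - b') := by
  ext q; cases q <;> simp [eConcat]

lemma norm_eConcat_sq [Fintype ι] [Fintype κ] (a : EuclideanSpace ℝ ι)
    (b : EuclideanSpace ℝ κ) : ‖eConcat a b‖ ^ 2 = ‖a‖ ^ 2 + ‖b‖ ^ 2 := by
  simp [EuclideanSpace.real_norm_sq_eq, Fintype.sum_sum_type, eConcat]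

lemma norm_eConcat_self_eOuter {c d : ℕ} (a : EuclideanSpace ℝ (Fin c))
    (x : EuclideanSpace ℝ (Fin d)) :
    ‖eConcat a (eOuter a x)‖ = ‖a‖ * Real.sqrt (1 + ‖x‖ ^ 2) := by
  rw [← pow_left_inj₀ (norm_nonneg _) (by positivity) two_ne_zero, norm_eConcat_sq,
    norm_eOuter, mul_pow, mul_pow, Real.sq_sqrt (by positivity)]
  ring

end Concat

section Expect

variable {Ω : Type*} [Fintype Ω] (p : Ω → ℝ)

lemma eExpect_add {E : Type*} [AddCommGroup E] [Module ℝ E] (f g : Ω → E) :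
    eExpect p (fun ω => f ω + g ω) = eExpect p f + eExpect p g := by
  simp [eExpect, smul_add, Finset.sum_add_distrib]

lemma eExpect_sub {E : Type*} [AddCommGroup E] [Module ℝ E] (f g : Ω → E) :
    eExpect p (fun ω => f ω - g ω) = eExpect p f - eExpect p g := by
  simp [eExpect, smul_sub, Finset.sum_sub_distrib]

lemma eExpect_eConcat {ι κ : Type*} (f : Ω → EuclideanSpace ℝ ι) (g : Ω → EuclideanSpace ℝ κ) :
    eExpect p (fun ω => eConcat (f ω) (g ω)) = eConcat (eExpect p f) (eExpect p g) := by
  ext q; cases q <;> simp [eExpect, eConcat]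

lemma norm_eExpect_le {E : Type*} [SeminormedAddCommGroup E] [NormedSpace ℝ E]
    (hp : ∀ ω, 0 ≤ p ω) (Y : Ω → E) : ‖eExpect p Y‖ ≤ ∑ ω, p ω * ‖Y ω‖ :=
  (norm_sum_le _ _).trans_eq <| Finset.sum_congr rfl fun ω _ => by
    rw [norm_smul, Real.norm_of_nonneg (hp ω)]

lemma eExpect_gradient_sub_eq {c d' : ℕ} (yt yv yht yhv : Ω → EuclideanSpace ℝ (Fin c))
    (Xt Xv : Ω → EuclideanSpace ℝ (Fin d'))
    (h1 : eExpect p yht = eExpect p yhv)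
    (h2 : eExpect p Xt = eExpect p Xv)
    (h3 : eExpect p (fun ω => eOuter (yht ω - yhv ω) (Xt ω))
        = eOuter (eExpect p (fun ω => yht ω - yhv ω)) (eExpect p Xt))
    (h4 : eExpect p (fun ω => eOuter (yhv ω - yv ω) (Xt ω - Xv ω))
        = eOuter (eExpect p (fun ω => yhv ω - yv ω)) (eExpect p (fun ω => Xt ω - Xv ω)))
    (h5 : eExpect p (fun ω => eOuter (yt ω - yv ω) (Xt ω))
        = eOuter (eExpect p (fun ω => yt ω - yv ω)) (eExpect p Xt)) :
    eExpect p (fun ω => eConcat (yht ω - yt ω) (eOuter (yht ω - yt ω) (Xt ω)))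
        - eExpect p (fun ω => eConcat (yhv ω - yv ω) (eOuter (yhv ω - yv ω) (Xv ω)))
      = eConcat (eExpect p (fun ω => yv ω - yt ω))
          (eOuter (eExpect p (fun ω => yv ω - yt ω)) (eExpect p Xt)) := by
  have hyh : eExpect p (fun ω => yht ω - yhv ω) = 0 := by rw [eExpect_sub, h1, sub_self]
  have hX : eExpect p (fun ω => Xt ω - Xv ω) = 0 := by rw [eExpect_sub, h2, sub_self]
  have hres : eExpect p (fun ω => eOuter (yhv ω - yv ω) (Xt ω))
      = eExpect p (fun ω => eOuter (yhv ω - yv ω) (Xv ω)) := by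
    rw [← sub_eq_zero, ← eExpect_sub]
    simp_rw [← eOuter_sub_right]
    rw [h4, hX, eOuter_zero_right]
  have hfst : eExpect p (fun ω => yht ω - yt ω) - eExpect p (fun ω => yhv ω - yv ω)
      = eExpect p (fun ω => yv ω - yt ω) := by
    calc _ = eExpect p (fun ω => (yht ω - yhv ω) + (yv ω - yt ω)) := by
          rw [← eExpect_sub]; congr 1; funext ω; abel
      _ = _ := by rw [eExpect_add, hyh, zero_add]
  have hsnd : eExpect p (fun ω => eOuter (yht ω - yt ω) (Xt ω))
        - eExpect p (fun ω => eOuter (yhv ω - yv ω) (Xv ω))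
      = eOuter (eExpect p (fun ω => yv ω - yt ω)) (eExpect p Xt) := by
    calc _ = eExpect p (fun ω => eOuter (yht ω - yhv ω) (Xt ω) + eOuter (yhv ω - yv ω) (Xt ω)
              - eOuter (yt ω - yv ω) (Xt ω))
            - eExpect p (fun ω => eOuter (yhv ω - yv ω) (Xv ω)) := by
          congr 2; funext ω; rw [← eOuter_add_left, ← eOuter_sub_left]; congr 1; abel
      _ = _ := by
          rw [eExpect_sub, eExpect_add, h3, hyh, eOuter_zero_left, zero_add, hres, h5,
            sub_sub_cancel_left, ← eOuter_neg_left, eExpect_sub, eExpect_sub, neg_sub]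
  rw [eExpect_eConcat, eExpect_eConcat, eConcat_sub, hfst, hsnd]

end Expect

theorem disparity_upper_bound_general {Ω : Type*} [Fintype Ω] (p : Ω → ℝ)
    (hp : ∀ ω, 0 ≤ p ω)
    {c d' : ℕ} (yt yv yht yhv : Ω → EuclideanSpace ℝ (Fin c))
    (Xt Xv : Ω → EuclideanSpace ℝ (Fin d')) (σ : ℝ)
    (h1 : eExpect p yht = eExpect p yhv)
    (h2 : eExpect p Xt = eExpect p Xv)
    (h3 : eExpect p (fun ω => eOuter (yht ω - yhv ω) (Xt ω))
        = eOuter (eExpect p (fun ω => yht ω - yhv ω)) (eExpect p Xt))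
    (h4 : eExpect p (fun ω => eOuter (yhv ω - yv ω) (Xt ω - Xv ω))
        = eOuter (eExpect p (fun ω => yhv ω - yv ω)) (eExpect p (fun ω => Xt ω - Xv ω)))
    (h5 : eExpect p (fun ω => eOuter (yt ω - yv ω) (Xt ω))
        = eOuter (eExpect p (fun ω => yt ω - yv ω)) (eExpect p Xt))
    (hσ : ‖eExpect p Xt‖ ≤ σ) :
    ‖eExpect p (fun ω => eConcat (yht ω - yt ω) (eOuter (yht ω - yt ω) (Xt ω)))
        - eExpect p (fun ω => eConcat (yhv ω - yv ω) (eOuter (yhv ω - yv ω) (Xv ω)))‖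
      ≤ (∑ ω, p ω * ‖yt ω - yv ω‖) * Real.sqrt (1 + σ ^ 2) := by
  rw [eExpect_gradient_sub_eq p yt yv yht yhv Xt Xv h1 h2 h3 h4 h5, norm_eConcat_self_eOuter]
  have hlabel : ‖eExpect p (fun ω => yv ω - yt ω)‖ ≤ ∑ ω, p ω * ‖yt ω - yv ω‖ :=
    (norm_eExpect_le p hp _).trans_eq (by simp_rw [norm_sub_rev])
  have hfeature : Real.sqrt (1 + ‖eExpect p Xt‖ ^ 2) ≤ Real.sqrt (1 + σ ^ 2) := by
    gcongr
  exact mul_le_mul hlabel hfeature (Real.sqrt_nonneg _) ((norm_nonneg _).trans hlabel)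

theorem disparity_upper_bound {Ω : Type*} [Fintype Ω] (p : Ω → ℝ)
    (hp : ∀ ω, 0 ≤ p ω) (hsum : ∑ ω, p ω = 1)
    {c d' : ℕ} (yt yv yht yhv : Ω → EuclideanSpace ℝ (Fin c))
    (Xt Xv : Ω → EuclideanSpace ℝ (Fin d')) (σ : ℝ)
    (h1 : eExpect p yht = eExpect p yhv)
    (h2 : eExpect p Xt = eExpect p Xv)
    (h3 : eExpect p (fun ω => eOuter (yht ω - yhv ω) (Xt ω))
        = eOuter (eExpect p (fun ω => yht ω - yhv ω)) (eExpect p Xt))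
    (h4 : eExpect p (fun ω => eOuter (yhv ω - yv ω) (Xt ω - Xv ω))
        = eOuter (eExpect p (fun ω => yhv ω - yv ω)) (eExpect p (fun ω => Xt ω - Xv ω)))
    (h5 : eExpect p (fun ω => eOuter (yt ω - yv ω) (Xt ω))
        = eOuter (eExpect p (fun ω => yt ω - yv ω)) (eExpect p Xt))
    (hσ : ‖eExpect p Xt‖ ≤ σ) :
    ‖eExpect p (fun ω => eConcat (yht ω - yt ω) (eOuter (yht ω - yt ω) (Xt ω)))
        - eExpect p (fun ω => eConcat (yhv ω - yv ω) (eOuter (yhv ω - yv ω) (Xv ω)))‖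
      ≤ (∑ ω, p ω * ‖yt ω - yv ω‖) * Real.sqrt (1 + σ ^ 2) :=
  disparity_upper_bound_general p hp yt yv yht yhv Xt Xv σ h1 h2 h3 h4 h5 hσ
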